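/- arXiv:2201.09321 — 5 statements merged into one kernel-verified Lean document; each statement's English description precedes it below -/
import Mathlib

section
/- If w ∈ ℂ𝔷ₙ satisfies Cw ≠ 0 and k is a positive integer, then there exists u ∈ ℂ𝔷ₙ with u^k = w. -/
open MvPolynomial

/-- The ideal generated by the squares of the generators. -/
noncomputable def zeonIdeal (n : ℕ) : Ideal (MvPolynomial (Fin n) ℂ) :=
  Ideal.span (Set.range fun i : Fin n => (X i : MvPolynomial (Fin n) ℂ) ^ 2)

/-- The `n`-particle complex zeon algebra `ℂ𝔷ₙ`. -/
abbrev CZ (n : ℕ) := MvPolynomial (Fin n) ℂ ⧸ zeonIdeal n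

/-- The generators `ζᵢ`. -/
noncomputable def zeta (n : ℕ) (i : Fin n) : CZ n :=
  Ideal.Quotient.mk (zeonIdeal n) (X i)

/-- The top blade `ζ_{[n]} = ζ₁⋯ζₙ`. -/
noncomputable def zeonTop (n : ℕ) : CZ n :=
  Ideal.Quotient.mk (zeonIdeal n) (∏ i : Fin n, X i)

/-- The scalar (grade-zero) part `Cu` of a zeon, as a ℂ-algebra homomorphism. -/
noncomputable def zeonScalar (n : ℕ) : CZ n →ₐ[ℂ] ℂ :=
  Ideal.Quotient.liftₐ (zeonIdeal n) (aeval fun _ : Fin n => (0 : ℂ)) (by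
    intro a ha
    have h : zeonIdeal n ≤ RingHom.ker (aeval (R := ℂ) fun _ : Fin n => (0 : ℂ)).toRingHom := by
      rw [zeonIdeal, Ideal.span_le]
      rintro _ ⟨i, rfl⟩
      simp [RingHom.mem_ker]
    exact h ha)

/-- The dual (nilpotent) part `Du = u - Cu` of a zeon. -/
noncomputable def zeonDual {n : ℕ} (u : CZ n) : CZ n :=
  u - algebraMap ℂ (CZ n) (zeonScalar n u)

/-- Coefficientwise complex conjugation on the zeon algebra. -/
noncomputable def zeonConj (n : ℕ) : CZ n →+* CZ n :=
  Ideal.Quotient.lift (zeonIdeal n)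
    ((Ideal.Quotient.mk (zeonIdeal n)).comp
      (MvPolynomial.map (starRingEnd ℂ) : MvPolynomial (Fin n) ℂ →+* MvPolynomial (Fin n) ℂ))
    (by
      intro a ha
      simp only [RingHom.comp_apply]
      rw [Ideal.Quotient.eq_zero_iff_mem]
      refine Submodule.span_induction ?_ ?_ ?_ ?_ ha
      · rintro x ⟨i, rfl⟩
        simp only [map_pow, MvPolynomial.map_X]
        exact Ideal.subset_span ⟨i, rfl⟩
      · simp
      · intro x y _ _ hx hy
        rw [map_add]; exact Ideal.add_mem _ hx hy
      · intro a x _ hx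
        rw [smul_eq_mul, map_mul]; exact Ideal.mul_mem_left _ _ hx)

/-- The zeon inner product `⟨x,y⟩ = Σ conj(yₗ) xₗ` on `(ℂ𝔷ₙ)^m`. -/
noncomputable def zinner {n m : ℕ} (x y : Fin m → CZ n) : CZ n :=
  ∑ ℓ : Fin m, zeonConj n (y ℓ) * x ℓ


/-- Binomial expansion to second order: `(1+x)^k = 1 + k*x + x^2*q`. -/
lemma one_add_pow_aux {R : Type*} [CommRing R] (x : R) :
    ∀ k : ℕ, ∃ q : R, (1 + x) ^ k = 1 + (k : R) * x + x ^ 2 * q := by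
  intro k
  induction k with
  | zero => exact ⟨0, by simp⟩
  | succ k ih =>
    obtain ⟨q, hq⟩ := ih
    refine ⟨(k : R) + q + x * q, ?_⟩
    rw [pow_succ, hq]
    push_cast
    ring

lemma zeonDual_nilpotent {n : ℕ} (w : CZ n) : IsNilpotent (zeonDual w) := by
  obtain ⟨p, rfl⟩ := Ideal.Quotient.mk_surjective (I := zeonIdeal n) w
  rw [← mem_nilradical]
  have hz : zeonScalar n (Ideal.Quotient.mk (zeonIdeal n) p) = constantCoeff p := by
    show (aeval fun _ : Fin n => (0 : ℂ)) p = constantCoeff p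
    simp [MvPolynomial.aeval_zero']
  have hdual : zeonDual (Ideal.Quotient.mk (zeonIdeal n) p) =
      Ideal.Quotient.mk (zeonIdeal n) (p - C (constantCoeff p)) := by
    rw [zeonDual, hz, map_sub, ← Ideal.Quotient.mk_algebraMap, MvPolynomial.algebraMap_eq]
  rw [hdual]
  have hmem : (p - C (constantCoeff p)) ∈
      Ideal.span (MvPolynomial.X '' (Set.univ : Set (Fin n)) :
        Set (MvPolynomial (Fin n) ℂ)) := by
    rw [MvPolynomial.mem_ideal_span_X_image]
    intro m hm
    have hm0 : m ≠ 0 := by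
      rintro rfl
      simp [MvPolynomial.mem_support_iff, MvPolynomial.coeff_sub,
        MvPolynomial.coeff_C, MvPolynomial.constantCoeff_eq] at hm
    obtain ⟨i, hi⟩ := Finsupp.ne_iff.mp hm0
    exact ⟨i, Set.mem_univ i, by simpa using hi⟩
  have := Ideal.mem_map_of_mem (Ideal.Quotient.mk (zeonIdeal n)) hmem
  rw [Ideal.map_span] at this
  refine Ideal.span_le.mpr ?_ this
  rintro _ ⟨_, ⟨i, -, rfl⟩, rfl⟩
  simp only [SetLike.mem_coe, mem_nilradical]
  refine ⟨2, ?_⟩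
  rw [← map_pow, Ideal.Quotient.eq_zero_iff_mem]
  exact Ideal.subset_span ⟨i, rfl⟩

/-- Every invertible zeon has `k`-th roots for every positive integer `k`. -/
theorem zeon_kth_root_exists (n : ℕ) (w : CZ n) (hw : zeonScalar n w ≠ 0)
    (k : ℕ) (hk : 0 < k) : ∃ u : CZ n, u ^ k = w := by
  have hkC : ((k : ℂ)) ≠ 0 := Nat.cast_ne_zero.mpr hk.ne'
  -- Newton iteration
  have key : ∀ m : ℕ, ∀ u : CZ n, IsUnit u → (u ^ k - w) ^ (2 ^ m) = 0 →
      ∃ v : CZ n, v ^ k = w := by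
    intro m
    induction m with
    | zero => intro u _ h; exact ⟨u, by simpa [sub_eq_zero] using h⟩
    | succ m ih =>
      intro u hu he
      have hukunit : IsUnit ((k : CZ n) * u ^ k) := by
        refine IsUnit.mul ?_ (hu.pow k)
        rw [← map_natCast (algebraMap ℂ (CZ n)) k]
        exact (isUnit_iff_ne_zero.mpr hkC).map (algebraMap ℂ (CZ n))
      obtain ⟨s, hs⟩ := hukunit.exists_right_inv
      obtain ⟨q, hq⟩ := one_add_pow_aux (-((u ^ k - w) * s)) k
      refine ih (u * (1 + -((u ^ k - w) * s))) ?_ ?_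
      · refine hu.mul (IsNilpotent.isUnit_one_add (IsNilpotent.neg ?_))
        exact ⟨2 ^ (m + 1), by rw [mul_pow, he, zero_mul]⟩
      · have expand : (u * (1 + -((u ^ k - w) * s))) ^ k - w =
            (u ^ k - w) ^ 2 * (s ^ 2 * u ^ k * q) := by
          rw [mul_pow, hq]
          linear_combination (-(u ^ k - w)) * hs
        rw [expand, mul_pow, ← pow_mul, show 2 * 2 ^ m = 2 ^ (m + 1) by ring, he, zero_mul]
  -- initial approximation
  obtain ⟨α, hα⟩ := IsAlgClosed.exists_pow_nat_eq (zeonScalar n w) hk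
  have hαne : α ≠ 0 := by
    intro h; apply hw; rw [← hα, h, zero_pow hk.ne']
  have hu₀unit : IsUnit (algebraMap ℂ (CZ n) α) :=
    (isUnit_iff_ne_zero.mpr hαne).map (algebraMap ℂ (CZ n))
  have hdiff : algebraMap ℂ (CZ n) α ^ k - w = -(zeonDual w) := by
    rw [zeonDual, ← map_pow, hα]; ring
  obtain ⟨N, hN⟩ := IsNilpotent.neg (zeonDual_nilpotent w)
  refine key N _ hu₀unit ?_
  rw [hdiff]
  exact pow_eq_zero_of_le (Nat.le_of_lt ((Nat.lt_two_pow_self (n := N)))) hN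
end

section
/- If α ∈ ℂ𝔷ₙ is invertible (Cα ≠ 0) and k is a positive integer, then α has exactly k distinct k-th roots in ℂ𝔷ₙ. -/
open MvPolynomial

section ZeonAux

variable {n : ℕ}

lemma zeon_binom_aux (t : CZ n) (k : ℕ) :
    ∃ r : CZ n, (1 + t) ^ k = 1 + algebraMap ℂ (CZ n) (k : ℂ) * t + t ^ 2 * r := by
  induction k with
  | zero => exact ⟨0, by simp⟩
  | succ k ih =>
    obtain ⟨r, hr⟩ := ih
    refine ⟨r + algebraMap ℂ (CZ n) (k : ℂ) + r * t, ?_⟩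
    rw [pow_succ, hr]
    push_cast [map_add, map_one]
    ring

lemma zeon_scalar_algebraMap (c : ℂ) : zeonScalar n (algebraMap ℂ (CZ n) c) = c := by
  simpa using (zeonScalar n).commutes c

lemma zeon_sub_C_mem (p : MvPolynomial (Fin n) ℂ) :
    p - C (constantCoeff p) ∈ Ideal.span (Set.range (X : Fin n → MvPolynomial (Fin n) ℂ)) := by
  induction p using MvPolynomial.induction_on with
  | C a => simp
  | add p q hp hq =>
    have := Ideal.add_mem _ hp hq
    simpa [map_add, C_add, sub_add_sub_comm] using this
  | mul_X p i hp =>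
    have h1 : p * X i - C (constantCoeff (p * X i)) = p * X i := by simp
    rw [h1]
    exact Ideal.mul_mem_left _ p (Ideal.subset_span ⟨i, rfl⟩)

lemma zeon_scalar_mk (p : MvPolynomial (Fin n) ℂ) :
    zeonScalar n (Ideal.Quotient.mk (zeonIdeal n) p) = constantCoeff p := by
  change (aeval fun _ : Fin n => (0 : ℂ)) p = _
  simp

lemma zeon_algebraMap_eq (c : ℂ) :
    algebraMap ℂ (CZ n) c = Ideal.Quotient.mk (zeonIdeal n) (C c) := by
  have h := (Ideal.Quotient.mkₐ ℂ (zeonIdeal n)).commutes c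
  rw [Ideal.Quotient.mkₐ_eq_mk, algebraMap_eq] at h
  exact h.symm

lemma zeon_dual_nilpotent (u : CZ n) : IsNilpotent (zeonDual u) := by
  obtain ⟨p, rfl⟩ := Ideal.Quotient.mk_surjective u
  have h3 : Ideal.span ((Ideal.Quotient.mk (zeonIdeal n)) ''
      Set.range (X : Fin n → MvPolynomial (Fin n) ℂ)) ≤ nilradical (CZ n) := by
    rw [Ideal.span_le]
    rintro _ ⟨_, ⟨i, rfl⟩, rfl⟩
    refine mem_nilradical.2 ⟨2, ?_⟩
    rw [← map_pow, Ideal.Quotient.eq_zero_iff_mem]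
    exact Ideal.subset_span ⟨i, rfl⟩
  have h2 : Ideal.Quotient.mk (zeonIdeal n) (p - C (constantCoeff p)) ∈
      Ideal.map (Ideal.Quotient.mk (zeonIdeal n))
        (Ideal.span (Set.range (X : Fin n → MvPolynomial (Fin n) ℂ))) :=
    Ideal.mem_map_of_mem _ (zeon_sub_C_mem p)
  rw [Ideal.map_span] at h2
  have h1 : zeonDual (Ideal.Quotient.mk (zeonIdeal n) p)
      = Ideal.Quotient.mk (zeonIdeal n) (p - C (constantCoeff p)) := by
    rw [zeonDual, zeon_scalar_mk, zeon_algebraMap_eq, map_sub]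
  rw [h1]
  exact mem_nilradical.1 (h3 h2)

lemma zeon_nilpotent_of_scalar_zero {x : CZ n} (hx : zeonScalar n x = 0) : IsNilpotent x := by
  have := zeon_dual_nilpotent x
  rwa [zeonDual, hx, map_zero, sub_zero] at this

lemma zeon_scalar_zero_of_nilpotent {x : CZ n} (hx : IsNilpotent x) : zeonScalar n x = 0 :=
  (hx.map (zeonScalar n)).eq_zero

lemma zeon_isUnit_of_scalar_ne {u : CZ n} (hu : zeonScalar n u ≠ 0) : IsUnit u := by
  have h1 : u = algebraMap ℂ (CZ n) (zeonScalar n u) + zeonDual u := by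
    rw [zeonDual]; ring
  rw [h1]
  exact IsNilpotent.isUnit_add_left_of_commute (zeon_dual_nilpotent u)
    ((isUnit_iff_ne_zero.2 hu).map (algebraMap ℂ (CZ n))) (Commute.all _ _)

lemma zeon_root_unique {d : CZ n} (hd : IsNilpotent d) {k : ℕ} (hk : 0 < k)
    (h : (1 + d) ^ k = 1) : d = 0 := by
  obtain ⟨r, hr⟩ := zeon_binom_aux d k
  rw [h] at hr
  have h2 : d * (algebraMap ℂ (CZ n) (k : ℂ) + d * r) = 0 := by
    linear_combination -hr
  have hsc : zeonScalar n (algebraMap ℂ (CZ n) (k : ℂ) + d * r) ≠ 0 := by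
    rw [map_add, map_mul, zeon_scalar_algebraMap, zeon_scalar_zero_of_nilpotent hd,
      zero_mul, add_zero]
    exact_mod_cast Nat.cast_ne_zero.2 hk.ne'
  obtain ⟨E, hE⟩ := zeon_isUnit_of_scalar_ne hsc
  have h4 := congrArg (· * (↑E⁻¹ : CZ n)) h2
  simp only [zero_mul, mul_assoc, ← hE, Units.mul_inv, mul_one] at h4
  exact h4

set_option maxHeartbeats 1000000 in
lemma zeon_exists_root (k : ℕ) (hk : 0 < k) :
    ∀ m : ℕ, ∀ y : CZ n, y ^ m = 0 → ∃ u : CZ n, u ^ k = 1 + y := by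
  intro m
  induction m using Nat.strong_induction_on with
  | _ m ih =>
    intro y hy
    by_cases h0 : m = 0
    · subst h0; rw [pow_zero] at hy
      have : Subsingleton (CZ n) := subsingleton_of_zero_eq_one hy.symm
      exact ⟨1, Subsingleton.elim _ _⟩
    by_cases h1 : m = 1
    · subst h1; rw [pow_one] at hy
      exact ⟨1, by rw [hy, add_zero, one_pow]⟩
    have h2 : 2 ≤ m := by omega
    have hK : (k : ℂ) ≠ 0 := Nat.cast_ne_zero.2 hk.ne'
    obtain ⟨t, ht⟩ : ∃ t : CZ n, t = algebraMap ℂ (CZ n) ((k : ℂ)⁻¹) * y := ⟨_, rfl⟩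
    obtain ⟨r, hr⟩ := zeon_binom_aux t k
    obtain ⟨r', hr'def⟩ : ∃ r' : CZ n, r' = algebraMap ℂ (CZ n) (((k : ℂ)⁻¹) ^ 2) * r :=
      ⟨_, rfl⟩
    have hr2 : (1 + t) ^ k = 1 + y + y ^ 2 * r' := by
      rw [hr, ht, hr'def]
      have e1 : algebraMap ℂ (CZ n) (k : ℂ) * (algebraMap ℂ (CZ n) ((k : ℂ)⁻¹) * y) = y := by
        rw [← mul_assoc, ← map_mul, mul_inv_cancel₀ hK, map_one, one_mul]
      rw [e1, map_pow]
      ring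
    have hynil : IsNilpotent y := ⟨m, hy⟩
    have htnil : IsNilpotent t := ht ▸ (Commute.all _ _).isNilpotent_mul_left hynil
    obtain ⟨U, hU⟩ := htnil.isUnit_one_add
    obtain ⟨z, hz⟩ : ∃ z : CZ n, (1 + t) * z = 1 :=
      ⟨(↑U⁻¹ : CZ n), by rw [← hU]; exact U.mul_inv⟩
    obtain ⟨y', hy'def⟩ : ∃ y' : CZ n, y' = (1 + y) * z ^ k - 1 := ⟨_, rfl⟩
    have key : y' = -(y ^ 2 * (r' * z ^ k)) := by
      have h3 : (1 + t) ^ k * z ^ k = 1 := by rw [← mul_pow, hz, one_pow]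
      calc y' = (1 + y) * z ^ k - (1 + t) ^ k * z ^ k := by rw [h3, hy'def]
        _ = ((1 + y) - (1 + t) ^ k) * z ^ k := by ring
        _ = -(y ^ 2 * (r' * z ^ k)) := by rw [hr2]; ring
    set s : ℕ := (m + 1) / 2 with hsdef
    have hsm : s < m := by omega
    have h2s : m ≤ 2 * s := by omega
    have hy' : y' ^ s = 0 := by
      have hx : (y ^ 2 * (r' * z ^ k)) ^ s = 0 := by
        rw [mul_pow, ← pow_mul]
        have hyz : y ^ (2 * s) = 0 := by
          rw [show 2 * s = m + (2 * s - m) by omega, pow_add, hy, zero_mul]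
        rw [hyz, zero_mul]
      have hneg := neg_pow (y ^ 2 * (r' * z ^ k)) s
      rw [key, hneg, hx, mul_zero]
    obtain ⟨v, hv⟩ := ih s hsm y' hy'
    refine ⟨(1 + t) * v, ?_⟩
    have h4 : 1 + y' = (1 + y) * z ^ k := by rw [hy'def]; ring
    calc ((1 + t) * v) ^ k = (1 + t) ^ k * v ^ k := mul_pow _ _ _
      _ = (1 + t) ^ k * (1 + y') := by rw [hv]
      _ = (1 + t) ^ k * ((1 + y) * z ^ k) := by rw [h4]
      _ = (1 + y) * ((1 + t) ^ k * z ^ k) := mul_left_comm _ _ _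
      _ = (1 + y) * ((1 + t) * z) ^ k := by rw [mul_pow]
      _ = 1 + y := by rw [hz, one_pow, mul_one]

end ZeonAux

set_option maxHeartbeats 2000000 in
/-- An invertible zeon has exactly `k` distinct `k`-th roots. -/
theorem zeon_kth_roots_card (n : ℕ) (α : CZ n) (hα : zeonScalar n α ≠ 0)
    (k : ℕ) (hk : 0 < k) :
    ∃ s : Finset (CZ n), (∀ u : CZ n, u ∈ s ↔ u ^ k = α) ∧ s.card = k := by
  classical
  set c : ℂ := zeonScalar n α with hc
  obtain ⟨m, hm⟩ := zeon_dual_nilpotent α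
  set y : CZ n := algebraMap ℂ (CZ n) (c⁻¹) * zeonDual α with hydef
  have hynil : IsNilpotent y := (Commute.all _ _).isNilpotent_mul_left ⟨m, hm⟩
  have hym : y ^ m = 0 := by
    rw [hydef, mul_pow, hm, mul_zero]
  have hαy : α = algebraMap ℂ (CZ n) c * (1 + y) := by
    rw [hydef, mul_add, mul_one, ← mul_assoc, ← map_mul, mul_inv_cancel₀ hα, map_one, one_mul,
      zeonDual]
    ring
  obtain ⟨ρ, hρ⟩ := zeon_exists_root k hk m y hym
  have hsy : zeonScalar n y = 0 := zeon_scalar_zero_of_nilpotent hynil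
  set e : ℂ := zeonScalar n ρ with hedef
  have hek : e ^ k = 1 := by
    rw [hedef, ← map_pow, hρ, map_add, map_one, hsy, add_zero]
  have he : e ≠ 0 := fun h => by simp [h, zero_pow hk.ne'] at hek
  obtain ⟨P, hP⟩ := zeon_isUnit_of_scalar_ne (show zeonScalar n ρ ≠ 0 from hedef ▸ he)
  obtain ⟨b₀, hb₀⟩ := IsAlgClosed.exists_pow_nat_eq c hk
  have hb₀0 : b₀ ≠ 0 := fun h => hα (by rw [← hb₀, h, zero_pow hk.ne'])
  have hprim := Complex.isPrimitiveRoot_exp k hk.ne'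
  set T : Finset ℂ := Polynomial.nthRootsFinset k (1 : ℂ) with hT
  have hinj : Set.InjOn (fun b : ℂ => algebraMap ℂ (CZ n) (b₀ * b) * ρ) T := by
    intro b1 _ b2 _ hEq
    have h5 := congrArg (· * (↑P⁻¹ : CZ n)) hEq
    simp only [mul_assoc, ← hP, Units.mul_inv, mul_one] at h5
    have h6 := congrArg (zeonScalar n) h5
    rw [zeon_scalar_algebraMap, zeon_scalar_algebraMap] at h6
    exact mul_left_cancel₀ hb₀0 h6
  refine ⟨T.image (fun b => algebraMap ℂ (CZ n) (b₀ * b) * ρ), ?_, ?_⟩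
  · intro u
    constructor
    · rintro hu
      rw [Finset.mem_image] at hu
      obtain ⟨b, hb, rfl⟩ := hu
      have hb1 : b ^ k = 1 := (Polynomial.mem_nthRootsFinset hk (1 : ℂ)).1 hb
      have h7 : (algebraMap ℂ (CZ n) (b₀ * b) * ρ) ^ k
          = algebraMap ℂ (CZ n) ((b₀ * b) ^ k) * ρ ^ k := by
        rw [mul_pow, map_pow]
      rw [h7, mul_pow, hb₀, hb1, mul_one, hρ, ← hαy]
    · intro hu
      set bu : ℂ := zeonScalar n u with hbu
      have hbuk : bu ^ k = c := by rw [hbu, ← map_pow, hu]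
      have hbu0 : bu ≠ 0 := fun h => hα (by rw [← hbuk, h, zero_pow hk.ne'])
      set b : ℂ := bu * b₀⁻¹ * e⁻¹ with hbdef
      have hbk : b ^ k = 1 := by
        rw [hbdef, mul_pow, mul_pow, hbuk, inv_pow, inv_pow, hb₀, hek, inv_one, mul_one,
          mul_inv_cancel₀ hα]
      have hbb : b₀ * b = bu * e⁻¹ := by
        rw [hbdef]; field_simp
      have hPinv : zeonScalar n (↑P⁻¹ : CZ n) = e⁻¹ := by
        have h5 : ρ * (↑P⁻¹ : CZ n) = 1 := by rw [← hP]; exact P.mul_inv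
        have h6 := congrArg (zeonScalar n) h5
        rw [map_mul, map_one, ← hedef] at h6
        exact eq_inv_of_mul_eq_one_right h6
      set w : CZ n := algebraMap ℂ (CZ n) ((bu * e⁻¹)⁻¹) * (↑P⁻¹ : CZ n) * u with hwdef
      set d : CZ n := w - 1 with hddef
      have hdsc : zeonScalar n d = 0 := by
        rw [hddef, map_sub, map_one, hwdef, map_mul, map_mul, zeon_scalar_algebraMap,
          hPinv, ← hbu]
        field_simp
        ring
      have hdnil : IsNilpotent d := zeon_nilpotent_of_scalar_zero hdsc
      have hwk : w ^ k = 1 := by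
        have hPk : (↑P⁻¹ : CZ n) ^ k * ρ ^ k = 1 := by
          rw [← mul_pow, ← hP, Units.inv_mul, one_pow]
        have huk : u ^ k = algebraMap ℂ (CZ n) c * ρ ^ k := by
          rw [hu, hαy, hρ]
        have hbek : ((bu * e⁻¹)⁻¹) ^ k = c⁻¹ := by
          rw [inv_pow, mul_pow, hbuk, inv_pow, hek, inv_one, mul_one]
        calc w ^ k = algebraMap ℂ (CZ n) (((bu * e⁻¹)⁻¹) ^ k)
              * ((↑P⁻¹ : CZ n) ^ k * ρ ^ k) * algebraMap ℂ (CZ n) c := by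
              rw [hwdef, mul_pow, mul_pow, map_pow, huk]; ring
          _ = 1 := by
              rw [hbek, hPk, mul_one, ← map_mul, inv_mul_cancel₀ hα, map_one]
      have hd0 : d = 0 := by
        refine zeon_root_unique hdnil hk ?_
        rw [hddef, add_sub_cancel, hwk]
      have hw1 : w = 1 := by rw [← sub_eq_zero, ← hddef, hd0]
      have hne : bu * e⁻¹ ≠ 0 := mul_ne_zero hbu0 (inv_ne_zero he)
      have hA : algebraMap ℂ (CZ n) (bu * e⁻¹) * algebraMap ℂ (CZ n) ((bu * e⁻¹)⁻¹) = 1 := by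
        rw [← map_mul, mul_inv_cancel₀ hne, map_one]
      have hρP : ρ * (↑P⁻¹ : CZ n) = 1 := by rw [← hP]; exact P.mul_inv
      have hu' : u = algebraMap ℂ (CZ n) (bu * e⁻¹) * ρ := by
        calc u = 1 * (1 * u) := by rw [one_mul, one_mul]
          _ = (algebraMap ℂ (CZ n) (bu * e⁻¹) * algebraMap ℂ (CZ n) ((bu * e⁻¹)⁻¹))
              * ((ρ * (↑P⁻¹ : CZ n)) * u) := by rw [hA, hρP]
          _ = (algebraMap ℂ (CZ n) (bu * e⁻¹) * ρ)
              * (algebraMap ℂ (CZ n) ((bu * e⁻¹)⁻¹) * (↑P⁻¹ : CZ n) * u) := by ring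
          _ = (algebraMap ℂ (CZ n) (bu * e⁻¹) * ρ) * w := by rw [hwdef]
          _ = algebraMap ℂ (CZ n) (bu * e⁻¹) * ρ := by rw [hw1, mul_one]
      rw [Finset.mem_image]
      exact ⟨b, (Polynomial.mem_nthRootsFinset hk (1 : ℂ)).2 hbk, by rw [hbb, ← hu']⟩
  · rw [Finset.card_image_of_injOn hinj, hT, hprim.card_nthRootsFinset]
end

section
/- For x ∈ (ℂ𝔷ₙ)^m, the scalar part C⟨x,x⟩ is a nonnegative real number, and C⟨x,x⟩ = 0 if and only if every component of x is nilpotent. -/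
open MvPolynomial

lemma zeonScalar_mk (n : ℕ) (p : MvPolynomial (Fin n) ℂ) :
    zeonScalar n (Ideal.Quotient.mk (zeonIdeal n) p) = aeval (fun _ => (0:ℂ)) p := rfl

lemma zeonScalar_conj (n : ℕ) (u : CZ n) :
    zeonScalar n (zeonConj n u) = starRingEnd ℂ (zeonScalar n u) := by
  induction u using Quotient.inductionOn with
  | h p =>
    show zeonScalar n (zeonConj n (Ideal.Quotient.mk (zeonIdeal n) p)) = _
    rw [zeonConj, Ideal.Quotient.lift_mk, RingHom.comp_apply, zeonScalar_mk]
    show _ = starRingEnd ℂ ((aeval fun _ => (0:ℂ)) p)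
    simp only [aeval_def, eval₂_map]
    rw [eval₂_comp_left (starRingEnd ℂ) (algebraMap ℂ ℂ) _ p]
    congr 1; ext; simp

lemma isNilpotent_iff_scalar (n : ℕ) (u : CZ n) :
    IsNilpotent u ↔ zeonScalar n u = 0 := by
  constructor
  · intro h
    have := h.map (zeonScalar n)
    rwa [isNilpotent_iff_eq_zero] at this
  · intro h
    induction u using Quotient.inductionOn with
    | h p =>
      have hp : aeval (fun _ => (0:ℂ)) p = 0 := h
      have hc : constantCoeff p = 0 := by
        rw [aeval_zero'] at hp; simpa using hp
      have hmem : p ∈ Ideal.span (MvPolynomial.X '' (Set.univ : Set (Fin n))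
          : Set (MvPolynomial (Fin n) ℂ)) := by
        rw [mem_ideal_span_X_image]
        intro m hm
        by_contra hcon
        push_neg at hcon
        have : m = 0 := by ext i; simpa using hcon i (Set.mem_univ i)
        rw [this] at hm
        exact (mem_support_iff.mp hm) (by simpa [constantCoeff_eq] using hc)
      have : (Ideal.Quotient.mk (zeonIdeal n) p : CZ n) ∈ nilradical (CZ n) := by
        have hle : Ideal.map (Ideal.Quotient.mk (zeonIdeal n))
            (Ideal.span (MvPolynomial.X '' Set.univ)) ≤ nilradical (CZ n) := by
          rw [Ideal.map_span, Ideal.span_le]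
          rintro _ ⟨_, ⟨i, -, rfl⟩, rfl⟩
          refine mem_nilradical.mpr ⟨2, ?_⟩
          rw [← map_pow, Ideal.Quotient.eq_zero_iff_mem]
          exact Ideal.subset_span ⟨i, rfl⟩
        exact hle (Ideal.mem_map_of_mem _ hmem)
      exact this

/-- `C⟨x,x⟩` is a nonnegative real number, and it vanishes iff every component of `x`
is nilpotent. -/
theorem zeonScalar_zinner_self_nonneg (n m : ℕ) (x : Fin m → CZ n) :
    (zeonScalar n (zinner x x)).im = 0 ∧ 0 ≤ (zeonScalar n (zinner x x)).re ∧
    (zeonScalar n (zinner x x) = 0 ↔ ∀ ℓ : Fin m, IsNilpotent (x ℓ)) := by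
  have key : zeonScalar n (zinner x x)
      = ((∑ ℓ : Fin m, Complex.normSq (zeonScalar n (x ℓ)) : ℝ) : ℂ) := by
    rw [zinner, map_sum, Complex.ofReal_sum]
    refine Finset.sum_congr rfl fun ℓ _ => ?_
    rw [map_mul, zeonScalar_conj, Complex.normSq_eq_conj_mul_self]
  refine ⟨by simp [key], ?_, ?_⟩
  · rw [key, Complex.ofReal_re]
    exact Finset.sum_nonneg fun ℓ _ => Complex.normSq_nonneg _
  rw [key]
  rw [Complex.ofReal_eq_zero]
  rw [Finset.sum_eq_zero_iff_of_nonneg fun ℓ _ => Complex.normSq_nonneg _]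
  constructor
  · intro h ℓ
    rw [isNilpotent_iff_scalar, ← Complex.normSq_eq_zero]
    exact h ℓ (Finset.mem_univ ℓ)
  · intro h ℓ _
    rw [Complex.normSq_eq_zero, ← isNilpotent_iff_scalar]
    exact h ℓ
end

section
/- A square matrix A over ℂ𝔷ₙ is invertible if and only if the complex matrix CA is invertible; in that case A⁻¹ = (CA)⁻¹ Σ_{ℓ=0}^{κ-1} (-1)^ℓ (DA·(CA)⁻¹)^ℓ, where DA = A − CA and κ is the nilpotency index of DA·(CA)⁻¹. -/
open MvPolynomial

lemma zeonIdeal_mem_iff {n : ℕ} {p : MvPolynomial (Fin n) ℂ} :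
    p ∈ zeonIdeal n ↔ ∀ m ∈ p.support, ∃ i : Fin n, 2 ≤ m i := by
  have h1 : (Set.range fun i : Fin n => (X i : MvPolynomial (Fin n) ℂ) ^ 2) =
      (fun s => monomial s (1 : ℂ)) '' Set.range (fun i : Fin n => Finsupp.single i 2) := by
    rw [← Set.range_comp]
    refine congrArg _ (funext fun i => ?_)
    simp [Function.comp, X_pow_eq_monomial]
  rw [zeonIdeal, h1, mem_ideal_span_monomial_image]
  simp [Finsupp.single_le_iff]

lemma pow_support_degree {n : ℕ} {p : MvPolynomial (Fin n) ℂ}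
    (hp : ∀ m ∈ p.support, m ≠ 0) (k : ℕ) :
    ∀ m ∈ (p ^ k).support, k ≤ ∑ i, m i := by
  classical
  induction k with
  | zero => intro m _; exact Nat.zero_le _
  | succ k ih =>
    intro m hm
    rw [pow_succ] at hm
    obtain ⟨a, ha, b, hb, rfl⟩ := Finset.mem_add.mp (support_mul _ _ hm)
    have hb1 : 1 ≤ ∑ i, b i := by
      rcases Finsupp.ne_iff.mp (hp b hb) with ⟨i, hi⟩
      calc 1 ≤ b i := Nat.one_le_iff_ne_zero.mpr (by simpa using hi)
        _ ≤ ∑ i, b i := Finset.single_le_sum (fun _ _ => Nat.zero_le _) (Finset.mem_univ i)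
    have ha1 := ih a ha
    have hadd : ∑ i, (a + b) i = (∑ i, a i) + ∑ i, b i := by
      simp [Finsupp.add_apply, Finset.sum_add_distrib]
    omega

lemma zeon_pow_eq_zero {n : ℕ} (u : CZ n) (h : zeonScalar n u = 0) : u ^ (n + 1) = 0 := by
  obtain ⟨p, rfl⟩ := Ideal.Quotient.mk_surjective u
  have hc : constantCoeff p = 0 := by
    change (aeval fun _ : Fin n => (0 : ℂ)) p = 0 at h
    simpa using h
  have hp : ∀ m ∈ p.support, m ≠ 0 := by
    intro m hm hm0
    exact mem_support_iff.mp hm (hm0 ▸ hc)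
  rw [← map_pow, Ideal.Quotient.eq_zero_iff_mem, zeonIdeal_mem_iff]
  intro m hm
  have hd := pow_support_degree hp (n + 1) m hm
  by_contra hcon
  push_neg at hcon
  have hle : ∑ i, m i ≤ ∑ _i : Fin n, 1 :=
    Finset.sum_le_sum (fun i _ => Nat.lt_succ_iff.mp (hcon i))
  simp at hle
  omega

lemma zeon_isUnit_iff {n : ℕ} (u : CZ n) : IsUnit u ↔ IsUnit (zeonScalar n u) := by
  constructor
  · exact fun h => h.map (zeonScalar n)
  · intro h
    have hd : zeonScalar n (u - algebraMap ℂ (CZ n) (zeonScalar n u)) = 0 := by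
      simp
    have hnil : IsNilpotent (u - algebraMap ℂ (CZ n) (zeonScalar n u)) :=
      ⟨n + 1, zeon_pow_eq_zero _ hd⟩
    have hu : IsUnit (algebraMap ℂ (CZ n) (zeonScalar n u)) := h.map (algebraMap ℂ (CZ n))
    have := IsNilpotent.isUnit_add_left_of_commute hnil hu (Commute.all _ _)
    simpa using this

lemma geom_pair {R : Type*} [Ring R] (N : R) {κ : ℕ} (h : N ^ κ = 0) :
    (1 + N) * (∑ ℓ ∈ Finset.range κ, ((-1 : ℤ) ^ ℓ) • N ^ ℓ) = 1 ∧
    (∑ ℓ ∈ Finset.range κ, ((-1 : ℤ) ^ ℓ) • N ^ ℓ) * (1 + N) = 1 := by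
  have hsum : (∑ ℓ ∈ Finset.range κ, ((-1 : ℤ) ^ ℓ) • N ^ ℓ)
      = ∑ ℓ ∈ Finset.range κ, (-N) ^ ℓ := by
    refine Finset.sum_congr rfl fun ℓ _ => ?_
    rw [zsmul_eq_mul, neg_pow N]
    push_cast
    ring_nf
  have hNκ : (-N) ^ κ = 0 := by rw [neg_pow N, h, mul_zero]
  have hneg : (1 + N) = -(-N - 1) := by rw [neg_sub, sub_neg_eq_add]
  constructor
  · rw [hsum, hneg, neg_mul, mul_geom_sum, hNκ, zero_sub, neg_neg]
  · rw [hsum, hneg, mul_neg, geom_sum_mul, hNκ, zero_sub, neg_neg]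


set_option maxHeartbeats 1000000 in
/-- A zeon matrix is invertible iff its scalar part is, with explicit inverse formula
`A⁻¹ = (CA)⁻¹ Σ_{ℓ<κ} (-1)^ℓ (DA·(CA)⁻¹)^ℓ`. -/
theorem zeon_matrix_inverse (n m : ℕ) (A : Matrix (Fin m) (Fin m) (CZ n)) :
    (IsUnit A ↔ IsUnit (A.map (zeonScalar n))) ∧
    ∀ (_ : IsUnit (A.map (zeonScalar n))) (κ : ℕ),
      let S : Matrix (Fin m) (Fin m) (CZ n) :=
        (A.map (zeonScalar n)).map (algebraMap ℂ (CZ n))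
      let D : Matrix (Fin m) (Fin m) (CZ n) := A - S
      ((D * S⁻¹) ^ κ = 0 ∧ ∀ j, 0 < j → j < κ → (D * S⁻¹) ^ j ≠ 0) →
      A * (S⁻¹ * ∑ ℓ ∈ Finset.range κ, ((-1 : ℤ) ^ ℓ) • (D * S⁻¹) ^ ℓ) = 1 ∧
      (S⁻¹ * ∑ ℓ ∈ Finset.range κ, ((-1 : ℤ) ^ ℓ) • (D * S⁻¹) ^ ℓ) * A = 1 := by
  constructor
  · rw [Matrix.isUnit_iff_isUnit_det, Matrix.isUnit_iff_isUnit_det, zeon_isUnit_iff,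
      AlgHom.map_det]
    rfl
  · intro hC κ S D hcond
    have hS : S = (A.map (zeonScalar n)).map (algebraMap ℂ (CZ n)) := rfl
    have hD : D = A - S := rfl
    clear_value S D
    have hSunit : IsUnit S := by
      rw [hS, ← RingHom.mapMatrix_apply]
      exact hC.map _
    have hSdet : IsUnit S.det := (Matrix.isUnit_iff_isUnit_det S).mp hSunit
    have hSS : S * S⁻¹ = 1 := Matrix.mul_nonsing_inv S hSdet
    have hS'S : S⁻¹ * S = 1 := Matrix.nonsing_inv_mul S hSdet
    set N : Matrix (Fin m) (Fin m) (CZ n) := D * S⁻¹ with hN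
    clear_value N
    obtain ⟨key, key2⟩ := geom_pair N hcond.1
    have hAS : A * S⁻¹ = 1 + N := by
      have hA : A = D + S := by rw [hD, sub_add_cancel]
      rw [hA, add_mul, hSS, ← hN, add_comm]
    have hA' : A = (1 + N) * S := by
      have h2 : A * S⁻¹ * S = (1 + N) * S := by rw [hAS]
      rw [mul_assoc, hS'S, mul_one] at h2
      exact h2
    constructor
    · rw [← mul_assoc, hAS, key]
    · have h3 : (∑ ℓ ∈ Finset.range κ, ((-1 : ℤ) ^ ℓ) • N ^ ℓ) * ((1 + N) * S) = S := by
        rw [← mul_assoc, key2, one_mul]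
      rw [hA', mul_assoc, h3, hS'S]
end

section
/- A square zeon matrix A ∈ Mat(m, ℂ𝔷ₙ) is nilpotent if and only if the complex matrix CA is nilpotent. -/
open MvPolynomial

set_option maxHeartbeats 1000000 in
set_option synthInstance.maxHeartbeats 400000 in
lemma ker_le_nilradical (n : ℕ) (u : CZ n) (hu : zeonScalar n u = 0) : IsNilpotent u := by
  obtain ⟨p, rfl⟩ := Ideal.Quotient.mk_surjective u
  have hp : aeval (fun _ : Fin n => (0:ℂ)) p = 0 := hu
  rw [aeval_zero'] at hp
  have hc : constantCoeff p = 0 := by simpa using hp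
  have hmem : p ∈ Ideal.span (Set.range (X : Fin n → MvPolynomial (Fin n) ℂ)) := by
    rw [← Set.image_univ, mem_ideal_span_X_image]
    intro m hm
    have h0 : (0 : Fin n →₀ ℕ) ∉ p.support := by
      rw [mem_support_iff]
      simpa [constantCoeff_eq] using hc
    have hm0 : m ≠ 0 := fun h => h0 (h ▸ hm)
    obtain ⟨i, hi⟩ := Finsupp.ne_iff.mp hm0
    exact ⟨i, Set.mem_univ i, by simpa using hi⟩
  have : Ideal.span (Set.range (X : Fin n → MvPolynomial (Fin n) ℂ)) ≤
      Ideal.comap (Ideal.Quotient.mk (zeonIdeal n)) (nilradical (CZ n)) := by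
    rw [Ideal.span_le]
    rintro _ ⟨i, rfl⟩
    show IsNilpotent (Ideal.Quotient.mk (zeonIdeal n) (X i))
    refine ⟨2, ?_⟩
    rw [← map_pow, Ideal.Quotient.eq_zero_iff_mem]
    exact Ideal.subset_span ⟨i, rfl⟩
  exact this hmem

set_option maxHeartbeats 1000000 in
set_option synthInstance.maxHeartbeats 400000 in
/-- A zeon matrix is nilpotent iff its entrywise scalar part is nilpotent. -/
theorem zeon_matrix_nilpotent_iff (n m : ℕ) (A : Matrix (Fin m) (Fin m) (CZ n)) :
    IsNilpotent A ↔ IsNilpotent (A.map (zeonScalar n)) := by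
  have hmp : ∀ k : ℕ, (A ^ k).map (zeonScalar n) = (A.map (zeonScalar n)) ^ k := by
    intro k
    have := map_pow ((zeonScalar n).toRingHom.mapMatrix (m := Fin m)) A k
    simpa [RingHom.mapMatrix_apply] using this
  constructor
  · rintro ⟨k, hk⟩
    refine ⟨k, ?_⟩
    rw [← hmp, hk]
    ext i j
    simp
  · rintro ⟨k, hk⟩
    obtain ⟨K, hK⟩ := IsNoetherianRing.isNilpotent_nilradical (CZ n)
    refine ⟨k * K, ?_⟩
    rw [pow_mul]
    have hker : ∀ i j, (A ^ k) i j ∈ nilradical (CZ n) := by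
      intro i j
      apply ker_le_nilradical
      have h2 : (A ^ k).map (zeonScalar n) = 0 := by rw [hmp, hk]
      have := congrFun (congrFun h2 i) j
      simpa [Matrix.map_apply] using this
    have hpow : ∀ (K : ℕ) (i j), ((A ^ k) ^ K) i j ∈ (nilradical (CZ n)) ^ K := by
      intro K
      induction K with
      | zero => intro i j; simp
      | succ K ih =>
        intro i j
        rw [pow_succ, pow_succ, Matrix.mul_apply]
        exact Ideal.sum_mem _ fun l _ => Ideal.mul_mem_mul (ih i l) (hker l j)
    ext i j
    have := hpow K i j
    rw [hK] at this
    simpa using this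
end
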